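/- arXiv:2601.10086 — 6 statements merged into one kernel-verified Lean document; each statement's English description precedes it below -/
import Mathlib

section
/- If Φ is coercive and β > 1/μ, then h_β(x,y) = f(x,y) + (β/2)‖∇_y f(x,y)‖² is coercive, i.e., h_β(x,y) → ∞ as ‖(x,y)‖ → ∞. -/
open Filter

/-- If `Φ` is coercive and `β > 1/μ`, then
`h_β(x,y) = f(x,y) + (β/2)‖∇_y f(x,y)‖²` is coercive, i.e. `h_β(x,y) → ∞` as `‖(x,y)‖ → ∞`. -/
theorem stmt_2 {n m : ℕ} (μ β : ℝ) (hμ : 0 < μ) (hβ : 1 / μ < β)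
    (f : EuclideanSpace ℝ (Fin n) → EuclideanSpace ℝ (Fin m) → ℝ)
    (gy : EuclideanSpace ℝ (Fin n) → EuclideanSpace ℝ (Fin m) → EuclideanSpace ℝ (Fin m))
    (Y : EuclideanSpace ℝ (Fin n) → EuclideanSpace ℝ (Fin m))
    (Φ : EuclideanSpace ℝ (Fin n) → ℝ)
    (hf : Continuous fun p : EuclideanSpace ℝ (Fin n) × EuclideanSpace ℝ (Fin m) => f p.1 p.2)
    (hgy : Continuous fun p : EuclideanSpace ℝ (Fin n) × EuclideanSpace ℝ (Fin m) => gy p.1 p.2)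
    (hYcont : Continuous Y)
    (hΦ : ∀ x, Φ x = f x (Y x))
    (hmax : ∀ x y, f x y ≤ Φ x)
    (hsc : ∀ x y, f x (Y x) - f x y ≤ (1 / (2 * μ)) * ‖gy x y‖ ^ 2)
    (hgrow : ∀ x y, μ * ‖y - Y x‖ ≤ ‖gy x y‖)
    (hbdd : BddBelow (Set.range Φ))
    (hcoer : Tendsto Φ (cocompact (EuclideanSpace ℝ (Fin n))) atTop) :
    Tendsto (fun p : EuclideanSpace ℝ (Fin n) × EuclideanSpace ℝ (Fin m) =>
        f p.1 p.2 + (β / 2) * ‖gy p.1 p.2‖ ^ 2)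
      (cocompact (EuclideanSpace ℝ (Fin n) × EuclideanSpace ℝ (Fin m))) atTop := by
  set c : ℝ := β / 2 - 1 / (2 * μ) with hcdef
  have hc0 : 0 < c := by
    have h1 : 1 / (2 * μ) = (1 / μ) / 2 := by ring
    have : 1 / (2 * μ) < β / 2 := by rw [h1]; linarith
    simp only [hcdef]; linarith
  clear_value c
  have key : ∀ x y, Φ x + c * μ ^ 2 * ‖y - Y x‖ ^ 2 ≤ f x y + (β / 2) * ‖gy x y‖ ^ 2 := by
    intro x y
    have h1 : Φ x ≤ f x y + (1 / (2 * μ)) * ‖gy x y‖ ^ 2 := by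
      have := hsc x y; rw [hΦ x]; linarith
    have h2 : μ ^ 2 * ‖y - Y x‖ ^ 2 ≤ ‖gy x y‖ ^ 2 := by
      have h3 := hgrow x y
      calc μ ^ 2 * ‖y - Y x‖ ^ 2 = (μ * ‖y - Y x‖) ^ 2 := by ring
        _ ≤ ‖gy x y‖ ^ 2 := by
            apply pow_le_pow_left₀ (by positivity) h3
    have hcβ : β / 2 = c + 1 / (2 * μ) := by rw [hcdef]; ring
    have h4 : c * (μ ^ 2 * ‖y - Y x‖ ^ 2) = c * μ ^ 2 * ‖y - Y x‖ ^ 2 := by ring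
    have h5 := mul_le_mul_of_nonneg_left h2 hc0.le
    rw [hcβ]; linarith
  rw [tendsto_atTop]
  intro M
  have hK := tendsto_atTop.1 hcoer M
  rw [Filter.eventually_iff, mem_cocompact] at hK
  obtain ⟨K₀, hK₀c, hK₀⟩ := hK
  obtain ⟨B, hB⟩ := hbdd
  have hBle : ∀ x, B ≤ Φ x := fun x => hB (Set.mem_range_self x)
  obtain ⟨R₀, hR₀⟩ := (hK₀c.image hYcont).isBounded.subset_closedBall 0
  set r : ℝ := Real.sqrt (max 0 ((M - B) / (c * μ ^ 2))) with hrdef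
  have hr0 : 0 ≤ r := Real.sqrt_nonneg _
  have hr2 : M - B ≤ c * μ ^ 2 * r ^ 2 := by
    have hsq : r ^ 2 = max 0 ((M - B) / (c * μ ^ 2)) := Real.sq_sqrt (le_max_left _ _)
    rw [hsq]
    have hcm : 0 < c * μ ^ 2 := by positivity
    have : (M - B) / (c * μ ^ 2) ≤ max 0 ((M - B) / (c * μ ^ 2)) := le_max_right _ _
    calc M - B = c * μ ^ 2 * ((M - B) / (c * μ ^ 2)) := by field_simp
      _ ≤ c * μ ^ 2 * max 0 ((M - B) / (c * μ ^ 2)) :=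
          mul_le_mul_of_nonneg_left this hcm.le
  rw [Filter.eventually_iff, mem_cocompact]
  refine ⟨K₀ ×ˢ Metric.closedBall 0 (R₀ + r), hK₀c.prod (isCompact_closedBall _ _), ?_⟩
  rintro ⟨x, y⟩ hp
  simp only [Set.mem_compl_iff, Set.mem_prod, not_and_or] at hp
  have hnn : 0 ≤ c * μ ^ 2 * ‖y - Y x‖ ^ 2 := by positivity
  by_cases hx : x ∈ K₀
  · have hy : y ∉ Metric.closedBall (0 : EuclideanSpace ℝ (Fin m)) (R₀ + r) := by
      rcases hp with h | h
      · exact absurd hx h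
      · exact h
    rw [Metric.mem_closedBall, dist_zero_right, not_le] at hy
    have hYx : ‖Y x‖ ≤ R₀ := by
      have := hR₀ (Set.mem_image_of_mem Y hx)
      rwa [Metric.mem_closedBall, dist_zero_right] at this
    have hd : r ≤ ‖y - Y x‖ := by
      have := norm_sub_norm_le y (Y x)
      have h1 : ‖y‖ - ‖Y x‖ ≤ ‖y - Y x‖ := this
      linarith
    have hd2 : r ^ 2 ≤ ‖y - Y x‖ ^ 2 := pow_le_pow_left₀ hr0 hd 2
    have : M ≤ Φ x + c * μ ^ 2 * ‖y - Y x‖ ^ 2 := by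
      have hcm : 0 < c * μ ^ 2 := by positivity
      nlinarith [hBle x, mul_le_mul_of_nonneg_left hd2 hcm.le]
    exact le_trans this (key x y)
  · have hx' : M ≤ Φ x := hK₀ hx
    have : M ≤ Φ x + c * μ ^ 2 * ‖y - Y x‖ ^ 2 := by linarith
    exact le_trans this (key x y)
end

section
/- Let (x*, y*) satisfy ‖∇_x h_β(x*,y*)‖ ≤ ε and ‖∇_y h_β(x*,y*)‖ ≤ ε, where β > 1/μ, ∇²_{yy} f ⪯ −μI, and ‖∇²_{xy} f(x*,y*)‖_{op} ≤ L. Then ‖∇_y f(x*,y*)‖ ≤ ε/(βμ−1) and ‖∇_x f(x*,y*)‖² ≤ 2(1 + β²L²/(βμ−1)²)ε². -/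
open scoped RealInnerProductSpace

/-- If `‖∇_x h_β(x*,y*)‖ ≤ ε` and `‖∇_y h_β(x*,y*)‖ ≤ ε`, where `β > 1/μ`,
`∇²_{yy} f ⪯ −μI` and `‖∇²_{xy} f(x*,y*)‖_op ≤ L`, then `‖∇_y f(x*,y*)‖ ≤ ε/(βμ−1)` and
`‖∇_x f(x*,y*)‖² ≤ 2(1 + β²L²/(βμ−1)²)ε²`. -/
theorem stmt_9 {E F : Type*} [NormedAddCommGroup E] [InnerProductSpace ℝ E]
    [NormedAddCommGroup F] [InnerProductSpace ℝ F]
    (ε L μ β : ℝ) (hμ : 0 < μ) (hβ : 1 / μ < β) (hε : 0 ≤ ε)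
    (gx : E) (gy : F) (Hxy : F →L[ℝ] E) (Hyy : F →L[ℝ] F)
    (hLxy : ‖Hxy‖ ≤ L)
    (hA : ∀ v : F, ⟪Hyy v, v⟫ ≤ -μ * ‖v‖ ^ 2)
    (hx : ‖gx + β • Hxy gy‖ ≤ ε) (hy : ‖gy + β • Hyy gy‖ ≤ ε) :
    ‖gy‖ ≤ ε / (β * μ - 1) ∧
      ‖gx‖ ^ 2 ≤ 2 * (1 + β ^ 2 * L ^ 2 / (β * μ - 1) ^ 2) * ε ^ 2 := by
  have hβ0 : 0 < β := lt_trans (by positivity) hβ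
  have hc : 0 < β * μ - 1 := by
    have := (div_lt_iff₀ hμ).mp hβ
    linarith
  have hL0 : 0 ≤ L := le_trans (norm_nonneg _) hLxy
  -- inner product estimate
  have hinner : ⟪gy + β • Hyy gy, gy⟫ ≤ (1 - β * μ) * ‖gy‖ ^ 2 := by
    rw [inner_add_left, real_inner_smul_left, real_inner_self_eq_norm_sq]
    have := hA gy
    nlinarith [this]
  have habs : -⟪gy + β • Hyy gy, gy⟫ ≤ ‖gy + β • Hyy gy‖ * ‖gy‖ :=
    (neg_le_abs _).trans (abs_real_inner_le_norm _ _)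
  have hkey : (β * μ - 1) * ‖gy‖ ^ 2 ≤ ε * ‖gy‖ := by
    have h1 : (β * μ - 1) * ‖gy‖ ^ 2 ≤ -⟪gy + β • Hyy gy, gy⟫ := by linarith
    have h2 : ‖gy + β • Hyy gy‖ * ‖gy‖ ≤ ε * ‖gy‖ :=
      mul_le_mul_of_nonneg_right hy (norm_nonneg _)
    linarith
  have hgy : ‖gy‖ ≤ ε / (β * μ - 1) := by
    rcases eq_or_lt_of_le (norm_nonneg gy) with h0 | h0
    · rw [← h0]; positivity
    · rw [le_div_iff₀ hc]
      have := (mul_le_mul_iff_of_pos_right h0).mp (by nlinarith : (β * μ - 1) * ‖gy‖ * ‖gy‖ ≤ ε * ‖gy‖)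
      linarith
  refine ⟨hgy, ?_⟩
  have hgx : ‖gx‖ ≤ ε + β * L * (ε / (β * μ - 1)) := by
    have h1 : ‖gx‖ ≤ ‖gx + β • Hxy gy‖ + ‖β • Hxy gy‖ := by
      have := norm_add_le (gx + β • Hxy gy) (-(β • Hxy gy))
      simpa using this
    have h2 : ‖β • Hxy gy‖ ≤ β * L * (ε / (β * μ - 1)) := by
      rw [norm_smul, Real.norm_eq_abs, abs_of_pos hβ0]
      have h3 : ‖Hxy gy‖ ≤ L * ‖gy‖ := le_trans (Hxy.le_opNorm gy)
        (mul_le_mul_of_nonneg_right hLxy (norm_nonneg _))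
      calc β * ‖Hxy gy‖ ≤ β * (L * ‖gy‖) := mul_le_mul_of_nonneg_left h3 hβ0.le
        _ ≤ β * (L * (ε / (β * μ - 1))) :=
          mul_le_mul_of_nonneg_left (mul_le_mul_of_nonneg_left hgy hL0) hβ0.le
        _ = β * L * (ε / (β * μ - 1)) := by ring
    linarith
  have he : 0 ≤ ε / (β * μ - 1) := by positivity
  have hsq : ‖gx‖ ^ 2 ≤ (ε + β * L * (ε / (β * μ - 1))) ^ 2 := by
    have := norm_nonneg gx
    nlinarith
  have : (ε + β * L * (ε / (β * μ - 1))) ^ 2 ≤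
      2 * (1 + β ^ 2 * L ^ 2 / (β * μ - 1) ^ 2) * ε ^ 2 := by
    have hc2 : (0:ℝ) < (β * μ - 1) ^ 2 := by positivity
    rw [show ε + β * L * (ε / (β * μ - 1)) = (ε * (β * μ - 1) + β * L * ε) / (β * μ - 1) from by
      field_simp, div_pow, div_le_iff₀ hc2,
      show 2 * (1 + β ^ 2 * L ^ 2 / (β * μ - 1) ^ 2) * ε ^ 2 * (β * μ - 1) ^ 2
        = 2 * ε ^ 2 * (β * μ - 1) ^ 2 + 2 * β ^ 2 * L ^ 2 * ε ^ 2 from by field_simp]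
    nlinarith [sq_nonneg (ε * (β * μ - 1) - β * L * ε)]
  linarith
end

section
/- Under μ-strong concavity in y and β > 1/μ, a point (x*,y*) satisfies ∇_x f(x*,y*) = 0 and ∇_y f(x*,y*) = 0 if and only if ∇_x h_β(x*,y*) = 0 and ∇_y h_β(x*,y*) = 0. -/
open scoped RealInnerProductSpace

/-- Under `μ`-strong concavity in `y` (so `∇²_{yy} f ⪯ −μI`) and `β > 1/μ`,
a point `(x*,y*)` satisfies `∇_x f = 0 ∧ ∇_y f = 0` iff `∇_x h_β = 0 ∧ ∇_y h_β = 0`,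
where `∇_x h_β = ∇_x f + β ∇²_{xy}f ∇_y f` and `∇_y h_β = (I + β ∇²_{yy}f) ∇_y f`. -/
theorem stmt_10 {E F : Type*} [NormedAddCommGroup E] [InnerProductSpace ℝ E]
    [NormedAddCommGroup F] [InnerProductSpace ℝ F]
    (μ β : ℝ) (hμ : 0 < μ) (hβ : 1 / μ < β)
    (gx : E) (gy : F) (Hxy : F →L[ℝ] E) (Hyy : F →L[ℝ] F)
    (hA : ∀ v : F, ⟪Hyy v, v⟫ ≤ -μ * ‖v‖ ^ 2) :
    (gx = 0 ∧ gy = 0) ↔ (gx + β • Hxy gy = 0 ∧ gy + β • Hyy gy = 0) := by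
  constructor
  · rintro ⟨hx, hy⟩
    simp [hx, hy]
  · rintro ⟨h1, h2⟩
    have hβ0 : 0 < β := lt_trans (by positivity) hβ
    have hgy : gy = 0 := by
      have hiy : ⟪gy + β • Hyy gy, gy⟫ = 0 := by rw [h2]; simp
      rw [inner_add_left, real_inner_smul_left, real_inner_self_eq_norm_sq] at hiy
      have hle : β * ⟪Hyy gy, gy⟫ ≤ β * (-μ * ‖gy‖ ^ 2) :=
        mul_le_mul_of_nonneg_left (hA gy) hβ0.le
      have key : (β * μ - 1) * ‖gy‖ ^ 2 ≤ 0 := by nlinarith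
      have hβμ : 1 < β * μ := by
        rw [div_lt_iff₀ hμ] at hβ; linarith
      have : ‖gy‖ ^ 2 ≤ 0 := by nlinarith
      have : ‖gy‖ = 0 := by nlinarith [sq_nonneg ‖gy‖, norm_nonneg gy]
      simpa using this
    subst hgy
    simp at h1
    exact ⟨h1, rfl⟩
end

section
/- Suppose β > 1/μ and f(x,·) is μ-strongly concave for each x. If (x*, y*) is a local minimizer of h_β(x,y) = f(x,y) + (β/2)‖∇_y f(x,y)‖², then y* = 𝒴*(x*) and x* is a local minimizer of Φ(x) = max_y f(x,y). -/
open InnerProductSpace Set Filter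

local notation "⟪" x ", " y "⟫" => @inner ℝ _ _ x y

/-- First-order inequality for concave functions on the whole space. -/
lemma concave_first_order {E : Type*} [NormedAddCommGroup E] [InnerProductSpace ℝ E]
    [CompleteSpace E] {c : E → ℝ} (hc : ConcaveOn ℝ Set.univ c) {y c' : E}
    (hd : HasFDerivAt c (InnerProductSpace.toDual ℝ E c') y) (z : E) :
    c z ≤ c y + ⟪c', z - y⟫ := by
  rcases eq_or_ne z y with rfl | hzy
  · simp
  · set L : ℝ →ᵃ[ℝ] E := AffineMap.lineMap y z with hL
    have hq : ConcaveOn ℝ Set.univ (c ∘ L) := by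
      simpa using hc.comp_affineMap L
    have hline : HasDerivAt (fun t : ℝ => L t) (z - y) 0 := by
      simp only [hL, AffineMap.lineMap_apply_module]
      have h1 : HasDerivAt (fun t : ℝ => (1 - t) • y) ((-1 : ℝ) • y) 0 :=
        (((hasDerivAt_id (0:ℝ)).const_sub 1).smul_const y)
      have h2 : HasDerivAt (fun t : ℝ => t • z) ((1 : ℝ) • z) 0 :=
        (hasDerivAt_id (0:ℝ)).smul_const z
      have := h1.add h2
      convert this using 1
      · rfl
      · module
    have hL0 : L 0 = y := by simp [hL]
    have hfd : HasFDerivAt c (InnerProductSpace.toDual ℝ E c') (L 0) := hL0 ▸ hd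
    have hcomp : HasDerivAt (c ∘ L) ⟪c', z - y⟫ 0 := by
      simpa [InnerProductSpace.toDual_apply_apply] using hfd.comp_hasDerivAt 0 hline
    have hslope := hq.slope_le_of_hasDerivAt (mem_univ 0) (mem_univ 1) zero_lt_one hcomp
    have h1 : (c ∘ L) 1 = c z := by simp [hL]
    have h0 : (c ∘ L) 0 = c y := by simp [hL]
    rw [slope_def_field, h1, h0] at hslope
    have hh : (c z - c y) / (1 - 0) = c z - c y := by norm_num
    rw [hh] at hslope
    linarith

/-- First-order inequality for strongly concave functions. -/
lemma strong_concave_first_order {E : Type*} [NormedAddCommGroup E] [InnerProductSpace ℝ E]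
    [CompleteSpace E] {μ : ℝ} {g : E → ℝ} (hc : StrongConcaveOn Set.univ μ g) {y g' : E}
    (hd : HasGradientAt g g' y) (z : E) :
    g z ≤ g y + ⟪g', z - y⟫ - μ / 2 * ‖z - y‖ ^ 2 := by
  have hcc : ConcaveOn ℝ Set.univ fun w => g w + μ / 2 * ‖w‖ ^ 2 :=
    strongConcaveOn_iff_convex.mp hc
  have hfg : HasFDerivAt g (InnerProductSpace.toDual ℝ E g') y :=
    hasGradientAt_iff_hasFDerivAt.mp hd
  have hfc : HasFDerivAt (fun w => g w + μ / 2 * ‖w‖ ^ 2)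
      (InnerProductSpace.toDual ℝ E (g' + μ • y)) y := by
    have h1 := (hasFDerivAt_id y).inner ℝ (hasFDerivAt_id y)
    have h2 := hfg.add (h1.const_mul (μ / 2))
    convert h2 using 1
    · rfl
    · rfl
    · funext w
      simp [real_inner_self_eq_norm_sq]
    · ext v
      simp only [ContinuousLinearMap.add_apply, InnerProductSpace.toDual_apply_apply,
        inner_add_left, real_inner_smul_left, ContinuousLinearMap.coe_smul', Pi.smul_apply,
        ContinuousLinearMap.coe_comp', Function.comp_apply, ContinuousLinearMap.prod_apply,
        ContinuousLinearMap.coe_id', id_eq, fderivInnerCLM_apply, smul_eq_mul]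
      rw [real_inner_comm v y]
      ring
  have key := concave_first_order hcc hfc z
  have hexp : ⟪g' + μ • y, z - y⟫ = ⟪g', z - y⟫ + μ * (⟪z, y⟫ - ‖y‖ ^ 2) := by
    simp [inner_add_left, real_inner_smul_left, inner_sub_right, real_inner_self_eq_norm_sq,
      real_inner_comm y z]
    ring
  have hns : ‖z - y‖ ^ 2 = ‖z‖ ^ 2 - 2 * ⟪z, y⟫ + ‖y‖ ^ 2 := norm_sub_sq_real z y
  rw [hexp] at key
  rw [hns]
  linarith [key]

set_option maxHeartbeats 1000000 in
/-- Suppose `β > 1/μ` and `f(x,·)` is `μ`-strongly concave for each `x`,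
with unique continuous maximizer `𝒴*(x)` and `Φ(x) = max_y f(x,y) = f(x, 𝒴*(x))`.
If `(x*,y*)` is a local minimizer of `h_β(x,y) = f(x,y) + (β/2)‖∇_y f(x,y)‖²`,
then `y* = 𝒴*(x*)` and `x*` is a local minimizer of `Φ`. -/
theorem stmt_11 {n m : ℕ} (μ β : ℝ) (hμ : 0 < μ) (hβ : 1 / μ < β)
    (f : EuclideanSpace ℝ (Fin n) → EuclideanSpace ℝ (Fin m) → ℝ)
    (hf : ContDiff ℝ 2 (fun p : EuclideanSpace ℝ (Fin n) × EuclideanSpace ℝ (Fin m) =>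
      f p.1 p.2))
    (hconc : ∀ x, StrongConcaveOn Set.univ μ (f x))
    (Y : EuclideanSpace ℝ (Fin n) → EuclideanSpace ℝ (Fin m))
    (hYcont : Continuous Y)
    (hYmax : ∀ x y, f x y ≤ f x (Y x))
    (Φ : EuclideanSpace ℝ (Fin n) → ℝ) (hΦ : ∀ x, Φ x = f x (Y x))
    (x' : EuclideanSpace ℝ (Fin n)) (y' : EuclideanSpace ℝ (Fin m))
    (hmin : IsLocalMin (fun p : EuclideanSpace ℝ (Fin n) × EuclideanSpace ℝ (Fin m) =>
      f p.1 p.2 + (β / 2) * ‖gradient (f p.1) p.2‖ ^ 2) (x', y')) :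
    y' = Y x' ∧ IsLocalMin Φ x' := by
  have hβpos : 0 < β := lt_trans (by positivity) hβ
  have hβμ : 1 < β * μ := by rw [div_lt_iff₀ hμ] at hβ; linarith
  have hFd : Differentiable ℝ (fun p : EuclideanSpace ℝ (Fin n) × EuclideanSpace ℝ (Fin m) =>
      f p.1 p.2) := hf.differentiable two_ne_zero
  have hfx : ∀ x y, DifferentiableAt ℝ (f x) y := fun x y =>
    (hFd (x, y)).comp y ((differentiableAt_const x).prodMk differentiableAt_id)
  have scfo : ∀ x (y z : EuclideanSpace ℝ (Fin m)),
      f x z ≤ f x y + ⟪gradient (f x) y, z - y⟫ - μ / 2 * ‖z - y‖ ^ 2 := fun x y z =>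
    strong_concave_first_order (hconc x) (hfx x y).hasGradientAt z
  -- gradient vanishes at the maximizer
  have hgradY : ∀ x, gradient (f x) (Y x) = 0 := by
    intro x
    have hmax : IsLocalMax (f x) (Y x) := Filter.Eventually.of_forall (fun y => hYmax x y)
    have h0 : fderiv ℝ (f x) (Y x) = 0 := hmax.fderiv_eq_zero
    show (InnerProductSpace.toDual ℝ _).symm (fderiv ℝ (f x) (Y x)) = 0
    rw [h0]; simp
  -- uniqueness of the critical point
  have uniq : ∀ x y, gradient (f x) y = 0 → y = Y x := by
    intro x y h0
    have h := scfo x y (Y x)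
    rw [h0] at h
    simp only [inner_zero_left, add_zero] at h
    have h2 := hYmax x y
    have h4 : ‖Y x - y‖ = 0 := by nlinarith [norm_nonneg (Y x - y), sq_nonneg (‖Y x - y‖)]
    have := norm_eq_zero.mp h4
    rw [sub_eq_zero] at this
    exact this.symm
  -- the gradient-in-y map and its smoothness
  set Gmap : EuclideanSpace ℝ (Fin n) × EuclideanSpace ℝ (Fin m) → EuclideanSpace ℝ (Fin m) :=
    fun p => (InnerProductSpace.toDual ℝ _).symm
      ((fderiv ℝ (fun q : EuclideanSpace ℝ (Fin n) × EuclideanSpace ℝ (Fin m) => f q.1 q.2) p).comp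
        (ContinuousLinearMap.inr ℝ _ _)) with hGmapdef
  have hGm : ∀ p : EuclideanSpace ℝ (Fin n) × EuclideanSpace ℝ (Fin m),
      HasGradientAt (f p.1) (Gmap p) p.2 := by
    intro p
    have h1 : HasFDerivAt (fun y : EuclideanSpace ℝ (Fin m) => (p.1, y))
        (ContinuousLinearMap.inr ℝ _ _) p.2 := hasFDerivAt_prodMk_right p.1 p.2
    have h2 := (hFd (p.1, p.2)).hasFDerivAt.comp p.2 h1
    exact hasFDerivAt_iff_hasGradientAt.mp h2
  have hGmeq : ∀ p : EuclideanSpace ℝ (Fin n) × EuclideanSpace ℝ (Fin m),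
      gradient (f p.1) p.2 = Gmap p := fun p => (hGm p).gradient
  have hGmDiff : Differentiable ℝ Gmap := by
    have hfd1 : ContDiff ℝ 1 (fderiv ℝ
        (fun q : EuclideanSpace ℝ (Fin n) × EuclideanSpace ℝ (Fin m) => f q.1 q.2)) :=
      hf.fderiv_right (by norm_num)
    set A := (ContinuousLinearMap.compL ℝ (EuclideanSpace ℝ (Fin m))
        (EuclideanSpace ℝ (Fin n) × EuclideanSpace ℝ (Fin m)) ℝ).flip
        (ContinuousLinearMap.inr ℝ _ _) with hA
    have hd1 : Differentiable ℝ (fun p : EuclideanSpace ℝ (Fin n) × EuclideanSpace ℝ (Fin m) =>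
        A (fderiv ℝ (fun q : EuclideanSpace ℝ (Fin n) × EuclideanSpace ℝ (Fin m) => f q.1 q.2) p)) :=
      A.differentiable.comp (hfd1.differentiable one_ne_zero)
    have hd2 := (InnerProductSpace.toDual ℝ
        (EuclideanSpace ℝ (Fin m))).symm.toContinuousLinearEquiv.toContinuousLinearMap.differentiable
    exact hd2.comp hd1
  -- the key curve in the y-direction
  set g : EuclideanSpace ℝ (Fin m) := gradient (f x') y' with hg
  have hline : HasDerivAt (fun t : ℝ => y' + t • g) g 0 := by
    simpa using (((hasDerivAt_id (0 : ℝ)).smul_const g).const_add y')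
  set c1 : ℝ → EuclideanSpace ℝ (Fin n) × EuclideanSpace ℝ (Fin m) :=
    fun t => (x', y' + t • g) with hc1
  have hcurve : HasDerivAt c1 ((0 : EuclideanSpace ℝ (Fin n)), g) 0 :=
    (hasDerivAt_const 0 x').prodMk hline
  have hc10 : c1 0 = (x', y') := by simp [hc1]
  set κ : ℝ → EuclideanSpace ℝ (Fin m) := fun t => Gmap (c1 t) with hκdef
  set B : EuclideanSpace ℝ (Fin m) := fderiv ℝ Gmap (x', y') (0, g) with hB
  have hκ : HasDerivAt κ B 0 := by
    have h1 : HasFDerivAt Gmap (fderiv ℝ Gmap (x', y')) (c1 0) := by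
      rw [hc10]; exact (hGmDiff (x', y')).hasFDerivAt
    exact h1.comp_hasDerivAt 0 hcurve
  have hκ0 : κ 0 = g := by
    have h := hGmeq (x', y')
    rw [hκdef]; simp only [hc10]
    rw [← h, hg]
  -- the function along the curve and its derivative at 0
  set φ : ℝ → ℝ := fun t => f x' (y' + t • g) + β / 2 * ‖κ t‖ ^ 2 with hφdef
  have hgr : HasFDerivAt (f x') (InnerProductSpace.toDual ℝ _ g) ((fun t : ℝ => y' + t • g) 0) := by
    simp only [zero_smul, add_zero]
    exact hasGradientAt_iff_hasFDerivAt.mp ((hfx x' y').hasGradientAt)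
  have p1 : HasDerivAt (fun t : ℝ => f x' (y' + t • g)) ⟪g, g⟫ 0 := by
    have := hgr.comp_hasDerivAt 0 hline
    simp [InnerProductSpace.toDual_apply_apply] at this
    rw [real_inner_self_eq_norm_sq]
    exact this
  have p2 : HasDerivAt (fun t : ℝ => ‖κ t‖ ^ 2) (⟪κ 0, B⟫ + ⟪B, κ 0⟫) 0 := by
    simpa only [real_inner_self_eq_norm_sq] using hκ.inner ℝ hκ
  have hφd : HasDerivAt φ (⟪g, g⟫ + β / 2 * (⟪κ 0, B⟫ + ⟪B, κ 0⟫)) 0 :=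
    p1.add (p2.const_mul (β / 2))
  -- 0 is a local min of φ
  have hφmin : IsLocalMin φ 0 := by
    have htend : Filter.Tendsto c1 (nhds 0) (nhds (x', y')) := by
      have := hcurve.continuousAt
      rwa [ContinuousAt, hc10] at this
    have hev := htend.eventually hmin
    refine hev.mono fun t ht => ?_
    have e1 : φ t = f (c1 t).1 (c1 t).2 + β / 2 * ‖gradient (f (c1 t).1) (c1 t).2‖ ^ 2 := by
      rw [hGmeq (c1 t)]
    have e0 : φ 0 = f x' y' + β / 2 * ‖gradient (f x') y'‖ ^ 2 := by
      have := hGmeq (x', y')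
      simp only [hφdef, hκdef, hc10]
      rw [← this, hg]
      simp
    rw [e0, e1]
    exact ht
  have hder : ⟪g, g⟫ + β / 2 * (⟪κ 0, B⟫ + ⟪B, κ 0⟫) = 0 := hφmin.hasDerivAt_eq_zero hφd
  -- monotonicity bound on the directional derivative of the gradient
  have hBg : ⟪B, g⟫ ≤ -(μ * ‖g‖ ^ 2) := by
    have hmono : ∀ t ∈ Set.Ioi (0 : ℝ), ⟪slope κ 0 t, g⟫ ≤ -(μ * ‖g‖ ^ 2) := by
      intro t ht
      have ht' : (0 : ℝ) < t := ht
      have h1 := scfo x' y' (y' + t • g)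
      have h2 := scfo x' (y' + t • g) y'
      have hgrt : gradient (f x') (y' + t • g) = κ t := hGmeq (x', y' + t • g)
      rw [← hg] at h1
      rw [hgrt] at h2
      have hd1 : y' + t • g - y' = t • g := by abel
      have hd2 : y' - (y' + t • g) = -(t • g) := by abel
      rw [hd1] at h1
      rw [hd2] at h2
      have hi1 : ⟪g, t • g⟫ = t * ‖g‖ ^ 2 := by
        rw [real_inner_smul_right, real_inner_self_eq_norm_sq]
      have hi2 : ⟪κ t, -(t • g)⟫ = -(t * ⟪κ t, g⟫) := by
        rw [inner_neg_right, real_inner_smul_right]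
      have hns : ‖t • g‖ ^ 2 = t ^ 2 * ‖g‖ ^ 2 := by
        rw [norm_smul, mul_pow, Real.norm_eq_abs, sq_abs]
      have hns2 : ‖-(t • g)‖ ^ 2 = t ^ 2 * ‖g‖ ^ 2 := by rw [norm_neg, hns]
      rw [hi1, hns] at h1
      rw [hi2, hns2] at h2
      -- adding: 0 ≤ t‖g‖² - t⟪κ t, g⟫ - μ t²‖g‖²
      have hsum : t * ⟪κ t, g⟫ ≤ t * ‖g‖ ^ 2 - μ * t ^ 2 * ‖g‖ ^ 2 := by linarith
      have hslope : slope κ 0 t = (t : ℝ)⁻¹ • (κ t - κ 0) := by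
        rw [slope_def_module]; simp
      rw [hslope, real_inner_smul_left, inner_sub_left, hκ0,
        real_inner_self_eq_norm_sq]
      rw [inv_mul_le_iff₀ ht']
      nlinarith
    have htl : Filter.Tendsto (fun t => ⟪slope κ 0 t, g⟫) (nhdsWithin 0 (Set.Ioi 0))
        (nhds ⟪B, g⟫) := by
      have h1 := hasDerivAt_iff_tendsto_slope.mp hκ
      have h2 := h1.mono_left (nhdsWithin_mono 0 (fun t ht => ne_of_gt ht))
      exact h2.inner tendsto_const_nhds
    exact le_of_tendsto htl (eventually_nhdsWithin_of_forall hmono)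
  -- conclude that the gradient vanishes
  have h1 : ‖g‖ ^ 2 + β * ⟪B, g⟫ = 0 := by
    rw [hκ0, real_inner_self_eq_norm_sq, real_inner_comm B g] at hder
    linarith
  have h2 : ‖g‖ ^ 2 ≤ 0 := by
    nlinarith [mul_le_mul_of_nonneg_left hBg hβpos.le, sq_nonneg ‖g‖]
  have h3 : ‖g‖ ^ 2 = 0 := le_antisymm h2 (sq_nonneg _)
  have hg0 : g = 0 := by
    have := pow_eq_zero_iff (two_ne_zero) |>.mp h3
    exact norm_eq_zero.mp this
  have hgrad0 : gradient (f x') y' = 0 := by rw [← hg]; exact hg0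
  have hy' : y' = Y x' := uniq x' y' hgrad0
  refine ⟨hy', ?_⟩
  have hcont2 : Filter.Tendsto (fun x => (x, Y x)) (nhds x') (nhds (x', y')) := by
    have hc : Continuous fun x : EuclideanSpace ℝ (Fin n) => (x, Y x) :=
      continuous_id.prodMk hYcont
    have h := hc.continuousAt (x := x')
    rw [ContinuousAt] at h
    rw [hy']
    exact h
  have hev := hcont2.eventually hmin
  refine hev.mono fun x hx => ?_
  have e1 : Φ x' = f x' y' + β / 2 * ‖gradient (f x') y'‖ ^ 2 := by
    rw [hgrad0, hΦ x', ← hy']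
    simp
  have e2 : f x (Y x) + β / 2 * ‖gradient (f x) (Y x)‖ ^ 2 = Φ x := by
    rw [hgradY x, hΦ x]
    simp
  rw [e1, ← e2]
  exact hx
end

section
/- Suppose β > 1/μ and f(x,·) is μ-strongly concave. If x* is a local minimizer of Φ(x) = max_y f(x,y) and y* = 𝒴*(x*), then (x*, y*) is a local minimizer of h_β(x,y) = f(x,y) + (β/2)‖∇_y f(x,y)‖². The same equivalence holds for global minimizers. -/
open InnerProductSpace Filter Topology Set

section aux

variable {m : ℕ}

private lemma foc_aux (μ : ℝ) (g : EuclideanSpace ℝ (Fin m) → ℝ)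
    (hg : Differentiable ℝ g) (hconc : StrongConcaveOn Set.univ μ g)
    (y z : EuclideanSpace ℝ (Fin m)) :
    g z - g y + μ / 2 * ‖z - y‖ ^ 2 ≤ ⟪gradient g y, z - y⟫_ℝ := by
  set φ : ℝ → EuclideanSpace ℝ (Fin m) := fun t => y + t • (z - y) with hφ
  have hline : HasDerivAt φ (z - y) 0 := by
    have h1 : HasDerivAt (fun t : ℝ => t • (z - y)) ((1 : ℝ) • (z - y)) 0 :=
      (hasDerivAt_id (0 : ℝ)).smul_const (z - y)
    simpa [φ] using h1.const_add y
  have hφ0 : φ 0 = y := by simp [φ]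
  have hgrad : HasFDerivAt g (toDual ℝ _ (gradient g y)) (φ 0) := by
    rw [hφ0]; exact (hg y).hasGradientAt.hasFDerivAt
  have hderiv : HasDerivAt (g ∘ φ) (⟪gradient g y, z - y⟫_ℝ) 0 := by
    have := hgrad.comp_hasDerivAt 0 hline
    simpa using this
  rw [hasDerivAt_iff_tendsto_slope] at hderiv
  have hslope : Tendsto (slope (g ∘ φ) 0) (𝓝[>] (0 : ℝ)) (𝓝 (⟪gradient g y, z - y⟫_ℝ)) :=
    hderiv.mono_left (nhdsWithin_mono _ (fun t ht => ne_of_gt ht))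
  have h2 : Tendsto (fun t : ℝ => (g z - g y) + (1 - t) * (μ / 2 * ‖z - y‖ ^ 2)) (𝓝[>] (0 : ℝ))
      (𝓝 (g z - g y + μ / 2 * ‖z - y‖ ^ 2)) := by
    have : Tendsto (fun t : ℝ => (g z - g y) + (1 - t) * (μ / 2 * ‖z - y‖ ^ 2)) (𝓝 (0 : ℝ))
        (𝓝 ((g z - g y) + (1 - 0) * (μ / 2 * ‖z - y‖ ^ 2))) := by
      apply Continuous.tendsto; continuity
    simpa using this.mono_left nhdsWithin_le_nhds
  have hev : ∀ᶠ t in 𝓝[>] (0 : ℝ),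
      (g z - g y) + (1 - t) * (μ / 2 * ‖z - y‖ ^ 2) ≤ slope (g ∘ φ) 0 t := by
    have hIoo : Ioo (0 : ℝ) 1 ∈ 𝓝[>] (0 : ℝ) :=
      Ioo_mem_nhdsGT_of_mem ⟨le_refl 0, one_pos⟩
    filter_upwards [hIoo] with t ht
    obtain ⟨ht0, ht1⟩ := ht
    have hconc2 := hconc.2 (mem_univ z) (mem_univ y) ht0.le (by linarith : (0:ℝ) ≤ 1 - t)
      (by ring)
    have heq : t • z + (1 - t) • y = φ t := by
      simp only [φ, smul_sub, sub_smul, one_smul]; abel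
    rw [heq] at hconc2
    have hslope_eq : slope (g ∘ φ) 0 t = (g (φ t) - g y) / t := by
      simp [slope, hφ0, div_eq_inv_mul]
    rw [hslope_eq, le_div_iff₀ ht0]
    simp only [smul_eq_mul] at hconc2
    nlinarith [hconc2]
  exact le_of_tendsto_of_tendsto h2 hslope hev

end aux

/-- Suppose `β > 1/μ` and `f(x,·)` is `μ`-strongly concave.
If `x*` is a local minimizer of `Φ(x) = max_y f(x,y)` and `y* = 𝒴*(x*)`, then `(x*,y*)` is a
local minimizer of `h_β(x,y) = f(x,y) + (β/2)‖∇_y f(x,y)‖²`.  The same holds for global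
minimizers. -/
theorem stmt_12 {n m : ℕ} (μ β : ℝ) (hμ : 0 < μ) (hβ : 1 / μ < β)
    (f : EuclideanSpace ℝ (Fin n) → EuclideanSpace ℝ (Fin m) → ℝ)
    (hf : ContDiff ℝ 2 (fun p : EuclideanSpace ℝ (Fin n) × EuclideanSpace ℝ (Fin m) =>
      f p.1 p.2))
    (hconc : ∀ x, StrongConcaveOn Set.univ μ (f x))
    (Y : EuclideanSpace ℝ (Fin n) → EuclideanSpace ℝ (Fin m))
    (hYmax : ∀ x y, f x y ≤ f x (Y x))
    (Φ : EuclideanSpace ℝ (Fin n) → ℝ) (hΦ : ∀ x, Φ x = f x (Y x))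
    (x' : EuclideanSpace ℝ (Fin n)) (y' : EuclideanSpace ℝ (Fin m))
    (hy' : y' = Y x') :
    (IsLocalMin Φ x' →
      IsLocalMin (fun p : EuclideanSpace ℝ (Fin n) × EuclideanSpace ℝ (Fin m) =>
        f p.1 p.2 + (β / 2) * ‖gradient (f p.1) p.2‖ ^ 2) (x', y')) ∧
    ((∀ x, Φ x' ≤ Φ x) →
      ∀ p : EuclideanSpace ℝ (Fin n) × EuclideanSpace ℝ (Fin m),
        f x' y' + (β / 2) * ‖gradient (f x') y'‖ ^ 2 ≤
          f p.1 p.2 + (β / 2) * ‖gradient (f p.1) p.2‖ ^ 2) := by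
  -- differentiability in y
  have hdiff : ∀ x, Differentiable ℝ (f x) := by
    intro x
    have h1 : Differentiable ℝ (fun p : EuclideanSpace ℝ (Fin n) × EuclideanSpace ℝ (Fin m) =>
        f p.1 p.2) := hf.differentiable (by norm_num)
    exact h1.comp ((differentiable_const x).prodMk differentiable_id)
  -- key inequality : Φ x ≤ h_β (x, y)
  have key : ∀ x y, Φ x ≤ f x y + (β / 2) * ‖gradient (f x) y‖ ^ 2 := by
    intro x y
    have hfoc := foc_aux μ (f x) (hdiff x) (hconc x) y (Y x)
    have hcs : ⟪gradient (f x) y, Y x - y⟫_ℝ ≤ ‖gradient (f x) y‖ * ‖Y x - y‖ :=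
      real_inner_le_norm _ _
    set G := ‖gradient (f x) y‖
    set D := ‖Y x - y‖
    have hG : 0 ≤ G := norm_nonneg _
    have hD : 0 ≤ D := norm_nonneg _
    have hβμ : 1 ≤ μ * β := by
      rw [div_lt_iff₀ hμ] at hβ; linarith
    rw [hΦ]
    nlinarith [sq_nonneg (G - μ * D), mul_pos hμ hμ, sq_nonneg G, sq_nonneg D,
      mul_nonneg hG hD]
  -- gradient vanishes at the maximizer
  have hgrad0 : gradient (f x') y' = 0 := by
    have hmax : IsLocalMax (f x') y' :=
      Filter.Eventually.of_forall (fun y => hy' ▸ hYmax x' y)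
    have hfd : fderiv ℝ (f x') y' = 0 := hmax.fderiv_eq_zero
    rw [gradient, hfd, map_zero]
  have hval : f x' y' + (β / 2) * ‖gradient (f x') y'‖ ^ 2 = Φ x' := by
    rw [hgrad0, hΦ, hy']
    simp
  constructor
  · intro hloc
    have h1 : ∀ᶠ p : EuclideanSpace ℝ (Fin n) × EuclideanSpace ℝ (Fin m) in 𝓝 (x', y'),
        Φ x' ≤ Φ p.1 := (continuous_fst.continuousAt :
        ContinuousAt Prod.fst ((x', y') :
          EuclideanSpace ℝ (Fin n) × EuclideanSpace ℝ (Fin m))).eventually hloc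
    refine h1.mono fun p hp => ?_
    calc f x' y' + (β / 2) * ‖gradient (f x') y'‖ ^ 2 = Φ x' := hval
      _ ≤ Φ p.1 := hp
      _ ≤ f p.1 p.2 + (β / 2) * ‖gradient (f p.1) p.2‖ ^ 2 := key p.1 p.2
  · intro hg p
    calc f x' y' + (β / 2) * ‖gradient (f x') y'‖ ^ 2 = Φ x' := hval
      _ ≤ Φ p.1 := hg p.1
      _ ≤ f p.1 p.2 + (β / 2) * ‖gradient (f p.1) p.2‖ ^ 2 := key p.1 p.2
end

section
/- Suppose Φ satisfies the KL inequality at x̄ with exponent θ ∈ [1/2,1): there exist C, ε > 0 with C‖∇Φ(x)‖ ≥ |Φ(x) − Φ(x̄)|^θ for ‖x − x̄‖ ≤ ε. If h_β satisfies the KL inequality at (x̄, 𝒴*(x̄)) with constant C₁ and exponent θ on a ball of radius ε₁, and 𝒴* is locally Lipschitz near x̄, then Φ satisfies the KL inequality at x̄ with the same exponent θ (with constant C₁, on a smaller ball). -/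
/-- If `h_β` satisfies the KL inequality at `(x̄, 𝒴*(x̄))` with constant `C₁`
and exponent `θ ∈ [1/2,1)` on a ball of radius `ε₁`, and `𝒴*` is locally Lipschitz near `x̄`,
then `Φ` satisfies the KL inequality at `x̄` with the same exponent `θ` (constant `C₁`, on a
smaller ball).  Here `h_β(x, 𝒴*(x)) = Φ(x)` and `‖∇h_β(x, 𝒴*(x))‖ = ‖∇Φ(x)‖`. -/
theorem stmt_15 {E F : Type*} [NormedAddCommGroup E] [NormedAddCommGroup F]
    (θ C₁ ε₁ K δ : ℝ) (hθ : θ ∈ Set.Ico (1 / 2 : ℝ) 1)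
    (hC₁ : 0 < C₁) (hε₁ : 0 < ε₁) (hK : 0 < K) (hδ : 0 < δ)
    (Φ : E → ℝ) (gΦ : E → E) (h : E × F → ℝ) (gh : E × F → E × F)
    (Y : E → F) (xb : E)
    (hval : ∀ x, h (x, Y x) = Φ x)
    (hgrad : ∀ x, ‖gh (x, Y x)‖ = ‖gΦ x‖)
    (hLip : ∀ x, ‖x - xb‖ ≤ δ → ‖Y x - Y xb‖ ≤ K * ‖x - xb‖)
    (hKL : ∀ z : E × F, ‖z - (xb, Y xb)‖ ≤ ε₁ →
      |h z - h (xb, Y xb)| ^ θ ≤ C₁ * ‖gh z‖) :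
    ∃ ε' > 0, ∀ x, ‖x - xb‖ ≤ ε' → |Φ x - Φ xb| ^ θ ≤ C₁ * ‖gΦ x‖ := by
  refine ⟨min δ (ε₁ / (1 + K)), lt_min hδ (div_pos hε₁ (by linarith)), fun x hx => ?_⟩
  have hxδ : ‖x - xb‖ ≤ δ := hx.trans (min_le_left _ _)
  have hx2 : ‖x - xb‖ ≤ ε₁ / (1 + K) := hx.trans (min_le_right _ _)
  have hY := hLip x hxδ
  have hdist : ‖((x, Y x) : E × F) - (xb, Y xb)‖ ≤ ε₁ := by
    have : ‖((x, Y x) : E × F) - (xb, Y xb)‖ = max ‖x - xb‖ ‖Y x - Y xb‖ := rfl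
    rw [this]
    have h1 : ‖x - xb‖ ≤ ε₁ := by
      calc ‖x - xb‖ ≤ ε₁ / (1 + K) := hx2
        _ ≤ ε₁ := by
          rw [div_le_iff₀ (by linarith)]
          nlinarith [hε₁.le]
    have h2 : ‖Y x - Y xb‖ ≤ ε₁ := by
      calc ‖Y x - Y xb‖ ≤ K * ‖x - xb‖ := hY
        _ ≤ K * (ε₁ / (1 + K)) := by nlinarith [norm_nonneg (x - xb)]
        _ ≤ ε₁ := by rw [mul_comm, div_mul_eq_mul_div, div_le_iff₀ (by linarith : (0:ℝ) < 1 + K)]; nlinarith [hε₁.le]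
    exact max_le h1 h2
  have := hKL (x, Y x) hdist
  rwa [hval, hval, hgrad] at this
end
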